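/- Suppose k^{δ−1} · max_{0 ≤ k0 < h(k)} |U_{k0,k}(n) − U*_{k0,k}(n)| → 0 in probability for some 1 < δ < 2, where the U*_{k0,k}(n) are i.i.d. Uniform(0,1), and suppose the search-start function satisfies f(k) = O(k^{δ−1}) with f(k) → ∞. Then under the null hypothesis of no outliers, the probability that the exponentially weighted sequential test rejects at some stage, P_{H0}( k̂_0 > 0 ) = P( U_{i,k}(n) ≥ (1−q)^{c·a^{k−i−1}} for some i ∈ {0,…,f(k)} ), converges to q as k → ∞. -/

import Mathlib

/-!
For ideal Pareto data the statistics `U*_i` are independent uniforms, so the ideal test rejects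
with probability `1 - ∏_{i ≤ f(k)} t_i`, where `t_i = (1-q)^{c a^{k-i-1}}`. This product equals
`(1-q)^{c ∑_{i ≤ f(k)} a^{k-i-1}}`, and the normalised geometric weights
`c ∑_{i ≤ f(k)} a^{k-i-1}` tend to `1` as `f(k) → ∞`, so the ideal rejection probability tends
to `q`.

For the actual statistics fix `r > 0` and put `ε = r / k^{δ-1}`. Outside the event
`k^{δ-1} max |U - U*| ≥ r`, whose probability tends to `0`, every `U_i` is within `ε` of `U*_i`,
so the rejection event is sandwiched between the ideal events with thresholds `t_i ± ε`. Since the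
uniform CDF is `1`-Lipschitz and products of numbers in `[0,1]` are `1`-Lipschitz in each factor,
these differ from the ideal probability by at most `(f(k)+1) ε = O(r)`.
-/

open MeasureTheory ProbabilityTheory Filter Asymptotics Set
open scoped Topology

theorem abs_prod_sub_prod_le_sum_abs_sub {ι : Type*} (s : Finset ι) {x y : ι → ℝ}
    (hx : ∀ i ∈ s, x i ∈ Icc 0 1) (hy : ∀ i ∈ s, y i ∈ Icc 0 1) :
    |∏ i ∈ s, x i - ∏ i ∈ s, y i| ≤ ∑ i ∈ s, |x i - y i| := by
  induction s using Finset.cons_induction with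
  | empty => simp
  | cons j s hj ih =>
    simp only [Finset.forall_mem_cons] at hx hy
    rw [Finset.prod_cons, Finset.prod_cons, Finset.sum_cons]
    have hX : |∏ i ∈ s, x i| ≤ 1 := by
      rw [abs_of_nonneg (Finset.prod_nonneg fun i hi => (hx.2 i hi).1)]
      exact Finset.prod_le_one (fun i hi => (hx.2 i hi).1) fun i hi => (hx.2 i hi).2
    have hyj : |y j| ≤ 1 := abs_le.2 ⟨by linarith [hy.1.1], hy.1.2⟩
    calc |x j * ∏ i ∈ s, x i - y j * ∏ i ∈ s, y i|
        = |(x j - y j) * ∏ i ∈ s, x i + y j * (∏ i ∈ s, x i - ∏ i ∈ s, y i)| := by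
          congr 1; ring
      _ ≤ |x j - y j| * 1 + 1 * ∑ i ∈ s, |x i - y i| := by
        grw [abs_add_le, abs_mul, abs_mul, hX, hyj, ih hx.2 hy.2]
      _ = _ := by ring

theorem abs_prod_projIcc_sub_prod_le {ι : Type*} (s : Finset ι) {t u : ι → ℝ} {ε : ℝ}
    (ht : ∀ i ∈ s, t i ∈ Icc 0 1) (hu : ∀ i ∈ s, |u i - t i| ≤ ε) :
    |∏ i ∈ s, (projIcc 0 1 zero_le_one (u i) : ℝ) - ∏ i ∈ s, t i| ≤ s.card * ε := by
  have hproj : ∏ i ∈ s, t i = ∏ i ∈ s, (projIcc 0 1 zero_le_one (t i) : ℝ) :=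
    Finset.prod_congr rfl fun i hi => by rw [projIcc_of_mem _ (ht i hi)]
  calc _ ≤ ∑ i ∈ s, |(projIcc 0 1 zero_le_one (u i) : ℝ) - projIcc 0 1 zero_le_one (t i)| := by
        rw [hproj]
        exact abs_prod_sub_prod_le_sum_abs_sub s (fun i _ => Subtype.prop _)
          fun i _ => Subtype.prop _
    _ ≤ ∑ _i ∈ s, ε :=
        Finset.sum_le_sum fun i hi => (abs_projIcc_sub_projIcc _).trans (hu i hi)
    _ = s.card * ε := by rw [Finset.sum_const, nsmul_eq_mul]

theorem Finset.le_ciSup_of_mem {ι α : Type*} [ConditionallyCompleteLattice α] {s : Finset ι}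
    (g : ι → α) {i : ι} (hi : i ∈ s) : g i ≤ ⨆ j ∈ s, g j := by
  refine le_ciSup₂ (f := fun j (_ : j ∈ s) => g j) ((s.finite_toSet.image g).bddAbove.mono ?_) i hi
  refine Set.iUnion_subset fun j => ?_
  rintro _ ⟨hj, rfl⟩
  exact ⟨j, hj, rfl⟩

theorem tendsto_zero_of_forall_abs_le_mul_add {α : Type*} {l : Filter α} {D : α → ℝ} {C : ℝ}
    {e : ℝ → α → ℝ} (he : ∀ r > 0, Tendsto (e r) l (𝓝 0))
    (hD : ∀ r > 0, ∀ᶠ x in l, |D x| ≤ C * r + e r x) : Tendsto D l (𝓝 0) := by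
  rw [Metric.tendsto_nhds]
  intro η hη
  obtain ⟨r, hr, hCr⟩ : ∃ r > 0, C * r < η / 2 := by
    refine ⟨η / (2 * (|C| + 1)), by positivity, ?_⟩
    rw [← mul_div_assoc, div_lt_div_iff₀ (by positivity) two_pos]
    nlinarith [le_abs_self C]
  filter_upwards [hD r hr, (he r hr).eventually_lt_const (half_pos hη)] with x hDx hex
  rw [Real.dist_0_eq_abs]
  linarith

theorem Asymptotics.IsBigO.exists_add_one_le_mul {α : Type*} {l : Filter α} {F : α → ℕ}
    {g : α → ℝ} (hF : (fun x => (F x : ℝ)) =O[l] g) (hg : ∀ᶠ x in l, 1 ≤ g x) :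
    ∃ C, ∀ᶠ x in l, (F x : ℝ) + 1 ≤ C * g x := by
  obtain ⟨C, hC⟩ := hF.bound
  refine ⟨C + 1, ?_⟩
  filter_upwards [hC, hg] with x hCx hgx
  rw [Real.norm_natCast, Real.norm_of_nonneg (by linarith)] at hCx
  linarith

theorem eventually_add_one_lt_of_tendsto_div {α : Type*} {l : Filter α} {F H K : α → ℕ}
    (hHK : Tendsto (fun x => (H x : ℝ) / K x) l (𝓝 0)) (hK : Tendsto K l atTop)
    (hFH : ∀ x, F x < H x) : ∀ᶠ x in l, F x + 1 < K x := by
  filter_upwards [hHK.eventually_lt_const zero_lt_one, hK.eventually_ge_atTop 1] with x hx hKx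
  rw [div_lt_one (by exact_mod_cast hKx)] at hx
  have hHx : H x < K x := by exact_mod_cast hx
  exact (Nat.succ_le_of_lt (hFH x)).trans_lt hHx

theorem sum_pow_sub_eq_pow_mul_sum_inv_pow {a : ℝ} (ha : a ≠ 0) {N : ℕ} {s : Finset ℕ}
    (hs : ∀ i ∈ s, i ≤ N) : ∑ i ∈ s, a ^ (N - i) = a ^ N * ∑ i ∈ s, a⁻¹ ^ i := by
  rw [Finset.mul_sum]
  exact Finset.sum_congr rfl fun i hi => by rw [pow_sub₀ a ha (hs i hi), inv_pow]

theorem sum_Icc_one_pow_eq_sum_range_pow_sub (a : ℝ) (N : ℕ) :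
    ∑ j ∈ Finset.Icc 1 N, a ^ j = ∑ i ∈ Finset.range N, a ^ (N - i) := by
  rw [Finset.range_eq_Ico, Finset.sum_Ico_reflect _ _ (Nat.le_succ N), Nat.add_sub_cancel_left,
    Nat.sub_zero, Finset.Ico_add_one_right_eq_Icc]

/-- Both sums are `a ^ N` times partial sums of the geometric series in `a⁻¹`, which converge to
the same limit. -/
theorem tendsto_sum_Iic_pow_sub_div_sum_Icc_pow {α : Type*} {l : Filter α} {a : ℝ} (ha : 1 < a)
    {N F : α → ℕ} (hF : Tendsto F l atTop) (hFN : ∀ᶠ x in l, F x < N x) :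
    Tendsto (fun x => (1 / ∑ j ∈ Finset.Icc 1 (N x), a ^ j) *
      ∑ i ∈ Finset.Iic (F x), a ^ (N x - i)) l (𝓝 1) := by
  have ha0 : a ≠ 0 := by positivity
  have hgeom := (hasSum_geometric_of_lt_one (inv_nonneg.2 (zero_le_one.trans ha.le))
    (inv_lt_one_of_one_lt₀ ha)).tendsto_sum_nat
  have hN : Tendsto N l atTop := tendsto_atTop_mono' l (hFN.mono fun _ h => h.le) hF
  have hlim_ne : (1 - a⁻¹)⁻¹ ≠ 0 := (inv_pos.2 (sub_pos.2 (inv_lt_one_of_one_lt₀ ha))).ne'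
  have hratio := (hgeom.comp (tendsto_add_atTop_nat 1 |>.comp hF)).div (hgeom.comp hN) hlim_ne
  rw [div_self hlim_ne] at hratio
  refine hratio.congr' ?_
  filter_upwards [hFN] with x hx
  rw [sum_Icc_one_pow_eq_sum_range_pow_sub,
    sum_pow_sub_eq_pow_mul_sum_inv_pow ha0 fun i hi => (Finset.mem_range.1 hi).le,
    sum_pow_sub_eq_pow_mul_sum_inv_pow ha0 fun i hi => (Finset.mem_Iic.1 hi).trans hx.le,
    ← Nat.range_succ_eq_Iic]
  simp only [Function.comp_apply, Pi.div_apply]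
  field_simp

noncomputable def rejectionThreshold (q a : ℝ) (k i : ℕ) : ℝ :=
  (1 - q) ^ ((1 / ∑ j ∈ Finset.Icc 1 (k - 1), a ^ j) * a ^ (k - i - 1))

theorem rejectionThreshold_mem_Icc {q a : ℝ} (hq0 : 0 ≤ q) (hq1 : q ≤ 1) (ha : 0 ≤ a)
    (k i : ℕ) : rejectionThreshold q a k i ∈ Icc 0 1 :=
  ⟨Real.rpow_nonneg (by linarith) _,
    Real.rpow_le_one (by linarith) (by linarith) (mul_nonneg
      (one_div_nonneg.2 (Finset.sum_nonneg fun j _ => pow_nonneg ha j)) (pow_nonneg ha _))⟩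

theorem prod_rejectionThreshold_Iic {q : ℝ} (hq1 : q < 1) (a : ℝ) (k F : ℕ) :
    ∏ i ∈ Finset.Iic F, rejectionThreshold q a k i =
      (1 - q) ^ ((1 / ∑ j ∈ Finset.Icc 1 (k - 1), a ^ j) *
        ∑ i ∈ Finset.Iic F, a ^ (k - 1 - i)) := by
  simp only [rejectionThreshold, Nat.sub_right_comm _ _ 1]
  rw [← Real.rpow_sum_of_pos (sub_pos.2 hq1), Finset.mul_sum]

theorem tendsto_one_sub_prod_rejectionThreshold {α : Type*} {l : Filter α} {q a : ℝ}
    (hq1 : q < 1) (ha : 1 < a) {k F : α → ℕ} (hF : Tendsto F l atTop)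
    (hFk : ∀ᶠ x in l, F x + 1 < k x) :
    Tendsto (fun x => 1 - ∏ i ∈ Finset.Iic (F x), rejectionThreshold q a (k x) i) l (𝓝 q) := by
  have hweight := tendsto_sum_Iic_pow_sub_div_sum_Icc_pow ha hF
    (N := fun x => k x - 1) (hFk.mono fun x hx => by omega)
  have hpow := (tendsto_const_nhds (x := 1 - q)).rpow hweight (Or.inl (by linarith))
  simp only [← prod_rejectionThreshold_Iic hq1, Real.rpow_one] at hpow
  simpa using (tendsto_const_nhds (x := (1 : ℝ))).sub hpow

theorem measureReal_preimage_Iio_of_map_eq_uniform {Ω : Type*} [MeasurableSpace Ω]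
    {P : Measure Ω} {X : Ω → ℝ} (hX : Measurable X)
    (hmap : P.map X = volume.restrict (Ioo 0 1)) (s : ℝ) :
    P.real (X ⁻¹' Iio s) = projIcc 0 1 zero_le_one s := by
  rw [measureReal_def, ← Measure.map_apply hX measurableSet_Iio, hmap,
    Measure.restrict_apply measurableSet_Iio, Iio_inter_Ioo, Real.volume_Ioo,
    ENNReal.toReal_ofReal', coe_projIcc, sub_zero, max_comm, min_comm]

theorem ProbabilityTheory.iIndepFun.measure_biInter_preimage_eq_prod_of_lt {Ω β : Type*}
    [MeasurableSpace Ω] [MeasurableSpace β] {P : Measure Ω} {N : ℕ} {X : ℕ → Ω → β}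
    (hX : iIndepFun (fun i : Fin N => X i) P) {S : Finset ℕ} (hS : ∀ i ∈ S, i < N)
    {B : ℕ → Set β} (hB : ∀ i, MeasurableSet (B i)) :
    P (⋂ i ∈ S, X i ⁻¹' B i) = ∏ i ∈ S, P (X i ⁻¹' B i) := by
  have h := hX.measure_inter_preimage_eq_mul (S.attachFin hS) (sets := fun i => B i)
    fun i _ => hB i
  rw [← Finset.map_valEmbedding_attachFin hS, Finset.prod_map, Finset.map_eq_image,
    Finset.set_biInter_finset_image]
  exact h

theorem measureReal_biInter_preimage_Iio_eq_prod_projIcc {Ω : Type*} [MeasurableSpace Ω]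
    {P : Measure Ω} {N : ℕ} {Y : ℕ → Ω → ℝ} (hY : ∀ i, Measurable (Y i))
    (hind : iIndepFun (fun i : Fin N => Y i) P)
    (hunif : ∀ i < N, P.map (Y i) = volume.restrict (Ioo 0 1))
    {S : Finset ℕ} (hS : ∀ i ∈ S, i < N) (s : ℕ → ℝ) :
    P.real (⋂ i ∈ S, Y i ⁻¹' Iio (s i)) = ∏ i ∈ S, (projIcc 0 1 zero_le_one (s i) : ℝ) := by
  rw [measureReal_def, hind.measure_biInter_preimage_eq_prod_of_lt hS fun _ => measurableSet_Iio,
    ENNReal.toReal_prod]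
  exact Finset.prod_congr rfl fun i hi =>
    measureReal_preimage_Iio_of_map_eq_uniform (hY i) (hunif i (hS i hi)) (s i)

theorem setOf_exists_le_subset_compl_biInter_union {Ω : Type*} {X Y : ℕ → Ω → ℝ} {F : ℕ}
    {t : ℕ → ℝ} {ε : ℝ} :
    {ω | ∃ i ≤ F, t i ≤ X i ω} ⊆
      (⋂ i ∈ Finset.Iic F, Y i ⁻¹' Iio (t i - ε))ᶜ ∪ {ω | ∃ i ≤ F, ε ≤ |X i ω - Y i ω|} := by
  rintro ω ⟨i, hi, hti⟩
  by_cases hXY : ε ≤ |X i ω - Y i ω|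
  · exact Or.inr ⟨i, hi, hXY⟩
  refine Or.inl fun hω => ?_
  have hYi : Y i ω < t i - ε := mem_iInter₂.1 hω i (Finset.mem_Iic.2 hi)
  linarith [le_abs_self (X i ω - Y i ω)]

theorem compl_biInter_subset_setOf_exists_le_union {Ω : Type*} {X Y : ℕ → Ω → ℝ} {F : ℕ}
    {t : ℕ → ℝ} {ε : ℝ} :
    (⋂ i ∈ Finset.Iic F, Y i ⁻¹' Iio (t i + ε))ᶜ ⊆
      {ω | ∃ i ≤ F, t i ≤ X i ω} ∪ {ω | ∃ i ≤ F, ε ≤ |X i ω - Y i ω|} := by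
  intro ω hω
  simp only [mem_compl_iff, mem_iInter₂, Finset.mem_Iic, mem_preimage, mem_Iio, not_forall,
    not_lt] at hω
  obtain ⟨i, hi, hYi⟩ := hω
  by_cases hXY : ε ≤ |X i ω - Y i ω|
  · exact Or.inr ⟨i, hi, hXY⟩
  exact Or.inl ⟨i, hi, by linarith [neg_abs_le (X i ω - Y i ω)]⟩

theorem abs_measureReal_exists_le_sub_le {Ω : Type*} [MeasurableSpace Ω] {P : Measure Ω}
    [IsProbabilityMeasure P] {X Y : ℕ → Ω → ℝ} (hY : ∀ i, Measurable (Y i)) {F : ℕ}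
    {t : ℕ → ℝ} (ht : ∀ i, t i ∈ Icc 0 1)
    (hbox : ∀ s : ℕ → ℝ, P.real (⋂ i ∈ Finset.Iic F, Y i ⁻¹' Iio (s i)) =
      ∏ i ∈ Finset.Iic F, (projIcc 0 1 zero_le_one (s i) : ℝ))
    {ε : ℝ} (hε : 0 ≤ ε) :
    |P.real {ω | ∃ i ≤ F, t i ≤ X i ω} - (1 - ∏ i ∈ Finset.Iic F, t i)| ≤
      (F + 1) * ε + P.real {ω | ∃ i ≤ F, ε ≤ |X i ω - Y i ω|} := by
  have hcompl : ∀ s : ℕ → ℝ, P.real (⋂ i ∈ Finset.Iic F, Y i ⁻¹' Iio (s i))ᶜ =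
      1 - ∏ i ∈ Finset.Iic F, (projIcc 0 1 zero_le_one (s i) : ℝ) := fun s => by
    rw [probReal_compl_eq_one_sub
      (Finset.measurableSet_biInter _ fun i _ => hY i measurableSet_Iio), hbox]
  have hshift : ∀ c : ℝ, |c| ≤ ε →
      |∏ i ∈ Finset.Iic F, (projIcc 0 1 zero_le_one (t i + c) : ℝ) - ∏ i ∈ Finset.Iic F, t i|
        ≤ (F + 1) * ε := fun c hc => by
    simpa using abs_prod_projIcc_sub_prod_le (Finset.Iic F) (u := fun i => t i + c)
      (fun i _ => ht i) fun i _ => by simpa using hc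
  have hupper := (measureReal_mono (μ := P)
    (setOf_exists_le_subset_compl_biInter_union (X := X) (Y := Y))).trans
    (measureReal_union_le _ _)
  have hlower := (measureReal_mono (μ := P)
    (compl_biInter_subset_setOf_exists_le_union (X := X) (Y := Y))).trans
    (measureReal_union_le _ _)
  simp only [sub_eq_add_neg _ ε, hcompl] at hupper hlower
  have h1 := abs_le.1 (hshift (-ε) (by rw [abs_neg, abs_of_nonneg hε]))
  have h2 := abs_le.1 (hshift ε (abs_of_nonneg hε).le)
  rw [abs_le]
  constructor <;> linarith

theorem setOf_exists_div_le_abs_sub_subset {Ω : Type*} {X Y : ℕ → Ω → ℝ} {F n : ℕ}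
    (hFn : F < n) {K r : ℝ} (hK : 0 < K) :
    {ω | ∃ i ≤ F, r / K ≤ |X i ω - Y i ω|} ⊆
      {ω | r ≤ ‖K * ⨆ j ∈ Finset.range n, |X j ω - Y j ω|‖} := by
  rintro ω ⟨i, hi, hle⟩
  rw [div_le_iff₀' hK] at hle
  calc r ≤ K * |X i ω - Y i ω| := hle
    _ ≤ K * ⨆ j ∈ Finset.range n, |X j ω - Y j ω| := by
      gcongr
      exact Finset.le_ciSup_of_mem (fun j => |X j ω - Y j ω|)
        (Finset.mem_range.2 (hi.trans_lt hFn))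
    _ ≤ _ := Real.le_norm_self _

theorem abs_measureReal_exists_le_sub_le_of_iIndepFun {Ω : Type*} [MeasurableSpace Ω]
    {P : Measure Ω} [IsProbabilityMeasure P] {X Y : ℕ → Ω → ℝ} {N n F : ℕ}
    (hY : ∀ i, Measurable (Y i)) (hind : iIndepFun (fun i : Fin N => Y i) P)
    (hunif : ∀ i < N, P.map (Y i) = volume.restrict (Ioo 0 1)) (hFN : F < N) (hFn : F < n)
    {t : ℕ → ℝ} (ht : ∀ i, t i ∈ Icc 0 1) {K r : ℝ} (hK : 0 < K) (hr : 0 ≤ r) :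
    |P.real {ω | ∃ i ≤ F, t i ≤ X i ω} - (1 - ∏ i ∈ Finset.Iic F, t i)| ≤
      (F + 1) * (r / K) + P.real {ω | r ≤ ‖K * ⨆ j ∈ Finset.range n, |X j ω - Y j ω|‖} :=
  (abs_measureReal_exists_le_sub_le hY ht
    (measureReal_biInter_preimage_Iio_eq_prod_projIcc hY hind hunif
      fun i hi => (Finset.mem_Iic.1 hi).trans_lt hFN) (by positivity)).trans
    (add_le_add_right (measureReal_mono (setOf_exists_div_le_abs_sub_subset hFn hK)) _)

theorem seqTest_asymptotic_typeI_error_general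
    {Ω : Type*} [MeasurableSpace Ω] (P : Measure Ω) [IsProbabilityMeasure P]
    (δ : ℝ) (hδ1 : 1 < δ)
    (k h f : ℕ → ℕ)
    (hkinf : Tendsto k atTop atTop)
    (hh : Tendsto (fun m => (h (k m) : ℝ) / (k m : ℝ)) atTop (𝓝 0))
    (U Ustar : ℕ → ℕ → Ω → ℝ)
    (hmeas : ∀ m i, Measurable (Ustar m i))
    (hind : ∀ m, iIndepFun
      (fun i : Fin (k m - 1) => Ustar m (i : ℕ)) P)
    (hunif : ∀ m, ∀ i < k m - 1,
      Measure.map (Ustar m i) P = volume.restrict (Set.Ioo (0:ℝ) 1))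
    (hconv : TendstoInMeasure P
      (fun m ω => (k m : ℝ) ^ (δ - 1) *
        ⨆ k0 ∈ Finset.range (h (k m)), |U m k0 ω - Ustar m k0 ω|)
      atTop (fun _ => 0))
    (hfO : (fun m => (f (k m) : ℝ)) =O[atTop] fun m => (k m : ℝ) ^ (δ - 1))
    (hfinf : Tendsto (fun m => f (k m)) atTop atTop)
    (hfh : ∀ m, f (k m) < h (k m))
    (q a : ℝ) (hq0 : 0 < q) (hq1 : q < 1) (ha : 1 < a) :
    Tendsto
      (fun m => P {ω | ∃ i ≤ f (k m),
        (1 - q) ^ ((1 / ∑ j ∈ Finset.Icc 1 (k m - 1), a ^ j) * a ^ (k m - i - 1)) ≤ U m i ω})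
      atTop (𝓝 (ENNReal.ofReal q)) := by
  have hK1 : ∀ᶠ m in atTop, 1 ≤ (k m : ℝ) ^ (δ - 1) :=
    ((tendsto_natCast_atTop_atTop.comp hkinf).eventually_ge_atTop 1).mono fun m hm =>
      Real.one_le_rpow hm (by linarith)
  obtain ⟨C, hFK⟩ := hfO.exists_add_one_le_mul hK1
  have hFk := eventually_add_one_lt_of_tendsto_div hh hkinf hfh
  have hbad := tendstoInMeasure_iff_measureReal_norm.1 hconv
  simp only [sub_zero] at hbad
  have hclose : Tendsto (fun m =>
      P.real {ω | ∃ i ≤ f (k m), rejectionThreshold q a (k m) i ≤ U m i ω} -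
        (1 - ∏ i ∈ Finset.Iic (f (k m)), rejectionThreshold q a (k m) i)) atTop (𝓝 0) := by
    refine tendsto_zero_of_forall_abs_le_mul_add (C := C) hbad fun r hr => ?_
    filter_upwards [hFK, hK1, hFk] with m hFKm hK1m hFkm
    have hK0 : 0 < (k m : ℝ) ^ (δ - 1) := by linarith
    refine (abs_measureReal_exists_le_sub_le_of_iIndepFun (hmeas m) (hind m) (hunif m)
      (by omega) (hfh m) (fun i => rejectionThreshold_mem_Icc hq0.le hq1.le (by linarith) _ _)
      hK0 hr.le).trans (add_le_add_left ?_ _)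
    calc (f (k m) + 1) * (r / (k m : ℝ) ^ (δ - 1))
        ≤ C * (k m : ℝ) ^ (δ - 1) * (r / (k m : ℝ) ^ (δ - 1)) := by gcongr
      _ = C * r := by field_simp
  have hreal := ENNReal.tendsto_ofReal (by
    simpa using hclose.add (tendsto_one_sub_prod_rejectionThreshold hq1 ha hfinf hFk))
  simp only [measureReal_def, ENNReal.ofReal_toReal (measure_ne_top P _)] at hreal
  exact hreal

/-- Asymptotic type-I error of the exponentially weighted sequential test.  If
`k^{δ−1} max_{0≤k0<h(k)} |U_{k0,k}(n) − U*_{k0,k}(n)| → 0` in probability for some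
`1 < δ < 2`, where the `U*_{k0,k}(n)` are independent Uniform(0,1) random variables, and the
search-start function satisfies `f(k) = O(k^{δ−1})`, `f(k) → ∞`, then under the null
hypothesis the rejection probability
`P(∃ i ≤ f(k), U_{i,k}(n) ≥ (1−q)^{c a^{k−i−1}})` converges to `q`. -/
theorem seqTest_asymptotic_typeI_error
    {Ω : Type*} [MeasurableSpace Ω] (P : Measure Ω) [IsProbabilityMeasure P]
    (δ : ℝ) (hδ1 : 1 < δ) (hδ2 : δ < 2)
    (k h f : ℕ → ℕ)
    (hkinf : Tendsto k atTop atTop)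
    (hh : Tendsto (fun m => (h (k m) : ℝ) / (k m : ℝ)) atTop (𝓝 0))
    (U Ustar : ℕ → ℕ → Ω → ℝ)
    (hmeas : ∀ m i, Measurable (Ustar m i))
    (hind : ∀ m, iIndepFun
      (fun i : Fin (k m - 1) => Ustar m (i : ℕ)) P)
    (hunif : ∀ m, ∀ i < k m - 1,
      Measure.map (Ustar m i) P = volume.restrict (Set.Ioo (0:ℝ) 1))
    (hconv : TendstoInMeasure P
      (fun m ω => (k m : ℝ) ^ (δ - 1) *
        ⨆ k0 ∈ Finset.range (h (k m)), |U m k0 ω - Ustar m k0 ω|)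
      atTop (fun _ => 0))
    (hfO : (fun m => (f (k m) : ℝ)) =O[atTop] fun m => (k m : ℝ) ^ (δ - 1))
    (hfinf : Tendsto (fun m => f (k m)) atTop atTop)
    (hfh : ∀ m, f (k m) < h (k m))
    (q a : ℝ) (hq0 : 0 < q) (hq1 : q < 1) (ha : 1 < a) :
    Tendsto
      (fun m => P {ω | ∃ i ≤ f (k m),
        (1 - q) ^ ((1 / ∑ j ∈ Finset.Icc 1 (k m - 1), a ^ j) * a ^ (k m - i - 1)) ≤ U m i ω})
      atTop (𝓝 (ENNReal.ofReal q)) :=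
  seqTest_asymptotic_typeI_error_general P δ hδ1 k h f hkinf hh U Ustar hmeas hind hunif hconv hfO
    hfinf hfh q a hq0 hq1 ha
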